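/- If X = (X′,V) and Y = (Y′,V) where X′ and Y′ are conditionally independent given V, then Wyner's common information C(X;Y) = min_{p(u|x,y): X−U−Y} I(X,Y;U) satisfies C(X;Y) = I(X;Y) = H(V). -/

import Mathlib

open Finset

def IsPMF {Ω : Type*} [Fintype Ω] (p : Ω → ℝ) : Prop :=
  (∀ ω, 0 ≤ p ω) ∧ ∑ ω, p ω = 1

noncomputable def pr {Ω : Type*} [Fintype Ω] {α : Type*} [Fintype α] [DecidableEq α]
    (p : Ω → ℝ) (X : Ω → α) (x : α) : ℝ :=
  ∑ ω ∈ Finset.univ.filter (fun ω => X ω = x), p ω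

/-- Shannon entropy (base 2) of the random variable `X` under `p`. -/
noncomputable def ent {Ω : Type*} [Fintype Ω] {α : Type*} [Fintype α] [DecidableEq α]
    (p : Ω → ℝ) (X : Ω → α) : ℝ :=
  -∑ x, pr p X x * Real.logb 2 (pr p X x)

/-- Conditional entropy H(X | U). -/
noncomputable def centH {Ω : Type*} [Fintype Ω] {α β : Type*} [Fintype α] [DecidableEq α]
    [Fintype β] [DecidableEq β] (p : Ω → ℝ) (X : Ω → α) (U : Ω → β) : ℝ :=
  ent p (fun ω => (X ω, U ω)) - ent p U

/-- Mutual information I(X;Y). -/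
noncomputable def mi {Ω : Type*} [Fintype Ω] {α β : Type*} [Fintype α] [DecidableEq α]
    [Fintype β] [DecidableEq β] (p : Ω → ℝ) (X : Ω → α) (Y : Ω → β) : ℝ :=
  ent p X + ent p Y - ent p (fun ω => (X ω, Y ω))

/-- Conditional mutual information I(X;Y|U). -/
noncomputable def cmi {Ω : Type*} [Fintype Ω] {α β γ : Type*} [Fintype α] [DecidableEq α]
    [Fintype β] [DecidableEq β] [Fintype γ] [DecidableEq γ]
    (p : Ω → ℝ) (X : Ω → α) (Y : Ω → β) (U : Ω → γ) : ℝ :=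
  centH p X U + centH p Y U - centH p (fun ω => (X ω, Y ω)) U

def IndepRV {Ω : Type*} [Fintype Ω] {α β : Type*} [Fintype α] [DecidableEq α]
    [Fintype β] [DecidableEq β] (p : Ω → ℝ) (X : Ω → α) (Y : Ω → β) : Prop :=
  ∀ x y, pr p (fun ω => (X ω, Y ω)) (x, y) = pr p X x * pr p Y y

/-- A conditional pmf `w(u|x,y)`. -/
def CondPMF {X Y U : Type*} [Fintype U] (w : X → Y → U → ℝ) : Prop :=
  (∀ x y u, 0 ≤ w x y u) ∧ ∀ x y, ∑ u, w x y u = 1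

/-- The joint pmf `q(x,y) w(u|x,y)` on `X × Y × U`. -/
noncomputable def jointQ {X Y U : Type*} (q : X × Y → ℝ) (w : X → Y → U → ℝ) :
    X × Y × U → ℝ := fun ω => q (ω.1, ω.2.1) * w ω.1 ω.2.1 ω.2.2

/-- I(X;Y|U) under the joint pmf `q(x,y) w(u|x,y)`. -/
noncomputable def cmiXY {X Y U : Type*} [Fintype X] [DecidableEq X] [Fintype Y] [DecidableEq Y]
    [Fintype U] [DecidableEq U] (q : X × Y → ℝ) (w : X → Y → U → ℝ) : ℝ :=
  cmi (jointQ q w) (fun ω => ω.1) (fun ω => ω.2.1) (fun ω => ω.2.2)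

/-- I(X,Y;U) under the joint pmf `q(x,y) w(u|x,y)`. -/
noncomputable def miXYU {X Y U : Type*} [Fintype X] [DecidableEq X] [Fintype Y] [DecidableEq Y]
    [Fintype U] [DecidableEq U] (q : X × Y → ℝ) (w : X → Y → U → ℝ) : ℝ :=
  mi (jointQ q w) (fun ω => (ω.1, ω.2.1)) (fun ω => ω.2.2)

/-!
`I(X;Y) = H(X′,V) + H(Y′,V) - H(X′,Y′,V) = H(V) + I(X′;Y′|V) = H(V)`. For every channel with
`I(X;Y|U) = 0` the chain rule and the nonnegativity of conditional mutual information (Gibbs'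
inequality for `p(x,y,u)` against `p(x,u) p(y,u) / p(u)`) give
`I(X,Y;U) = I(X,Y;U) + I(X;Y|U) ≥ I(X;Y)`. The bound is attained by the deterministic channel
`U = V`: since `V` is a function of `X` and of `Y`, `I(X;Y|V) = I(X;Y) - H(V) = 0` and
`I(X,Y;V) = H(V)`.
-/

open Real

section Distribution

variable {Ω α β : Type*} [Fintype Ω] [Fintype α] [DecidableEq α] [Fintype β] [DecidableEq β]
  {p : Ω → ℝ}

lemma pr_nonneg (hp : ∀ ω, 0 ≤ p ω) (X : Ω → α) (x : α) : 0 ≤ pr p X x :=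
  Finset.sum_nonneg fun ω _ => hp ω

lemma sum_pr (p : Ω → ℝ) (X : Ω → α) : ∑ x, pr p X x = ∑ ω, p ω :=
  Finset.sum_fiberwise _ X p

lemma IsPMF.pr (hp : IsPMF p) (X : Ω → α) : IsPMF (pr p X) :=
  ⟨pr_nonneg hp.1 X, by rw [sum_pr, hp.2]⟩

lemma pr_pr (p : Ω → ℝ) (Z : Ω → α) (g : α → β) (b : β) :
    pr (pr p Z) g b = pr p (fun ω => g (Z ω)) b := by
  simp only [pr]
  rw [← Finset.sum_fiberwise_of_maps_to (s := Finset.univ.filter fun ω => g (Z ω) = b)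
    (t := Finset.univ.filter fun a => g a = b) (g := Z) (by simp)]
  refine Finset.sum_congr rfl fun a ha => Finset.sum_congr ?_ fun _ _ => rfl
  ext ω
  simp only [Finset.mem_filter, Finset.mem_univ, true_and] at ha ⊢
  constructor
  · exact fun h => ⟨h ▸ ha, h⟩
  · exact And.right

lemma pr_le_pr_comp (hp : ∀ ω, 0 ≤ p ω) (Z : Ω → α) (g : α → β) (a : α) :
    pr p Z a ≤ pr p (fun ω => g (Z ω)) (g a) :=
  Finset.sum_le_sum_of_subset_of_nonneg
    (fun ω => by simpa using congrArg g) fun ω _ _ => hp ω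

lemma pr_comp_injective (X : Ω → α) {e : α → β} (he : e.Injective) (a : α) :
    pr p (fun ω => e (X ω)) (e a) = pr p X a := by
  simp only [pr, he.eq_iff]

lemma ent_pr (p : Ω → ℝ) (Z : Ω → α) (g : α → β) :
    ent (pr p Z) g = ent p (fun ω => g (Z ω)) := by
  simp only [ent, pr_pr]

lemma ent_comp_eq_sum (p : Ω → ℝ) (Z : Ω → α) (g : α → β) :
    ent p (fun ω => g (Z ω))
      = -∑ a, pr p Z a * logb 2 (pr p (fun ω => g (Z ω)) (g a)) := by
  rw [ent, ← Finset.sum_fiberwise Finset.univ g]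
  congr 1
  refine Finset.sum_congr rfl fun b _ => ?_
  rw [← pr_pr, pr, Finset.sum_mul]
  exact Finset.sum_congr rfl fun a ha => by
    rw [(Finset.mem_filter.1 ha).2, ← pr_pr p Z g b]; rfl

lemma ent_comp_injective (p : Ω → ℝ) (X : Ω → α) {e : α → β} (he : e.Injective) :
    ent p (fun ω => e (X ω)) = ent p X := by
  rw [ent_comp_eq_sum]
  simp only [pr_comp_injective X he]
  rfl

lemma ent_prod_of_eq_comp {X : Ω → α} {W : Ω → β} {φ : α → β} (hW : ∀ ω, W ω = φ (X ω)) :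
    ent p (fun ω => (X ω, W ω)) = ent p X := by
  simp_rw [hW]
  exact ent_comp_injective p X (e := fun a => (a, φ a)) fun a b h => congrArg Prod.fst h

lemma sum_pr_prod_left (p : Ω → ℝ) (X : Ω → α) (U : Ω → β) (u : β) :
    ∑ x, pr p (fun ω => (X ω, U ω)) (x, u) = pr p U u := by
  rw [← pr_pr p (fun ω => (X ω, U ω)) Prod.snd, pr, Finset.sum_filter, Fintype.sum_prod_type]
  simp

end Distribution

lemma sub_le_mul_log_sub_log {r a : ℝ} (hr : 0 < r) (ha : 0 < a) :
    r - a ≤ r * (log r - log a) := by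
  have h := log_le_sub_one_of_pos (div_pos ha hr)
  rw [log_div ha.ne' hr.ne'] at h
  have := mul_le_mul_of_nonneg_left h hr.le
  rw [mul_sub r (a / r), mul_div_cancel₀ a hr.ne'] at this
  linarith

lemma sum_mul_log_sub_log_nonneg {ι : Type*} (s : Finset ι) {r a : ι → ℝ}
    (hr : ∀ i ∈ s, 0 ≤ r i) (ha : ∀ i ∈ s, 0 ≤ a i) (hra : ∀ i ∈ s, 0 < r i → 0 < a i)
    (hsum : ∑ i ∈ s, a i ≤ ∑ i ∈ s, r i) :
    0 ≤ ∑ i ∈ s, r i * (log (r i) - log (a i)) := by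
  have hterm : ∀ i ∈ s, r i - a i ≤ r i * (log (r i) - log (a i)) := fun i hi => by
    rcases (hr i hi).eq_or_lt with h | h
    · simp [← h, ha i hi]
    · exact sub_le_mul_log_sub_log h (hra i hi h)
  calc (0 : ℝ) ≤ ∑ i ∈ s, (r i - a i) := by rw [Finset.sum_sub_distrib]; linarith
    _ ≤ _ := Finset.sum_le_sum hterm

section Information

variable {Ω α β γ δ : Type*} [Fintype Ω] [Fintype α] [DecidableEq α] [Fintype β] [DecidableEq β]
  [Fintype γ] [DecidableEq γ] [Fintype δ] [DecidableEq δ] {p : Ω → ℝ}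

theorem cmi_nonneg (hp : IsPMF p) (X : Ω → α) (Y : Ω → β) (U : Ω → γ) : 0 ≤ cmi p X Y U := by
  set r := pr p (fun ω => ((X ω, Y ω), U ω))
  set f : (α × β) × γ → ℝ := fun z => pr p (fun ω => (X ω, U ω)) (z.1.1, z.2)
  set g : (α × β) × γ → ℝ := fun z => pr p (fun ω => (Y ω, U ω)) (z.1.2, z.2)
  set h : (α × β) × γ → ℝ := fun z => pr p U z.2
  set a : (α × β) × γ → ℝ := fun z => f z * g z / h z
  have hXU : ent p (fun ω => (X ω, U ω)) = -∑ z, r z * logb 2 (f z) :=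
    ent_comp_eq_sum p (fun ω => ((X ω, Y ω), U ω)) fun z => (z.1.1, z.2)
  have hYU : ent p (fun ω => (Y ω, U ω)) = -∑ z, r z * logb 2 (g z) :=
    ent_comp_eq_sum p (fun ω => ((X ω, Y ω), U ω)) fun z => (z.1.2, z.2)
  have hU : ent p U = -∑ z, r z * logb 2 (h z) :=
    ent_comp_eq_sum p (fun ω => ((X ω, Y ω), U ω)) fun z => z.2
  have hcmi : cmi p X Y U
      = ∑ z, r z * (logb 2 (r z) + logb 2 (h z) - logb 2 (f z) - logb 2 (g z)) := by
    rw [cmi, centH, centH, centH, hXU, hYU, hU, ent]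
    simp only [mul_add, mul_sub, Finset.sum_add_distrib, Finset.sum_sub_distrib]
    ring
  have hr : ∀ z, 0 ≤ r z := pr_nonneg hp.1 _
  have hpos : ∀ z, 0 < r z → 0 < f z ∧ 0 < g z ∧ 0 < h z := fun z h0 =>
    ⟨h0.trans_le (pr_le_pr_comp hp.1 _ (fun z => (z.1.1, z.2)) z),
      h0.trans_le (pr_le_pr_comp hp.1 _ (fun z => (z.1.2, z.2)) z),
      h0.trans_le (pr_le_pr_comp hp.1 _ (fun z => z.2) z)⟩
  have hterm : ∀ z, r z * (logb 2 (r z) + logb 2 (h z) - logb 2 (f z) - logb 2 (g z))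
      = r z * (log (r z) - log (a z)) / log 2 := fun z => by
    rcases (hr z).eq_or_lt with h0 | h0
    · simp [← h0]
    obtain ⟨hf, hg, hh⟩ := hpos z h0
    simp only [a, logb, log_div (mul_pos hf hg).ne' hh.ne', log_mul hf.ne' hg.ne']
    ring
  have hsum_a : ∑ z, a z = 1 := calc
    ∑ z, a z = ∑ u, (∑ x, pr p (fun ω => (X ω, U ω)) (x, u))
        * (∑ y, pr p (fun ω => (Y ω, U ω)) (y, u)) / pr p U u := by
      rw [Fintype.sum_prod_type_right]
      refine Finset.sum_congr rfl fun u _ => ?_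
      rw [Fintype.sum_mul_sum, Finset.sum_div, Fintype.sum_prod_type]
      simp_rw [Finset.sum_div]
      rfl
    _ = ∑ u, pr p U u := by simp_rw [sum_pr_prod_left, mul_self_div_self]
    _ = 1 := by rw [sum_pr, hp.2]
  rw [hcmi, Finset.sum_congr rfl fun z _ => hterm z, ← Finset.sum_div]
  refine div_nonneg (sum_mul_log_sub_log_nonneg _ (fun z _ => hr z)
    (fun z _ => ?_) (fun z _ hz => ?_) ?_) (log_nonneg one_le_two)
  · exact div_nonneg (mul_nonneg (pr_nonneg hp.1 _ _) (pr_nonneg hp.1 _ _)) (pr_nonneg hp.1 _ _)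
  · obtain ⟨hf, hg, hh⟩ := hpos z hz
    exact div_pos (mul_pos hf hg) hh
  · rw [hsum_a, sum_pr, hp.2]

lemma ent_swap (p : Ω → ℝ) (X : Ω → α) (Y : Ω → β) :
    ent p (fun ω => (Y ω, X ω)) = ent p (fun ω => (X ω, Y ω)) :=
  ent_comp_injective p (fun ω => (X ω, Y ω)) (e := Prod.swap) Prod.swap_injective

/-- The chain rule `I(X,Y;U) + I(X;Y|U) = I(X;Y) + I(X;U|Y) + I(Y;U|X)`, with the last two terms
dropped. -/
theorem mi_le_mi_add_cmi (hp : IsPMF p) (X : Ω → α) (Y : Ω → β) (U : Ω → γ) :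
    mi p X Y ≤ mi p (fun ω => (X ω, Y ω)) U + cmi p X Y U := by
  have hXU := cmi_nonneg hp X U Y
  have hYU := cmi_nonneg hp Y U X
  have e₁ : ent p (fun ω => ((X ω, U ω), Y ω)) = ent p (fun ω => ((X ω, Y ω), U ω)) :=
    ent_comp_injective p (fun ω => ((X ω, Y ω), U ω))
      (e := fun s : (α × β) × γ => ((s.1.1, s.2), s.1.2))
      fun _ _ h => by simp only [Prod.mk.injEq] at h; ext <;> tauto
  have e₂ : ent p (fun ω => ((Y ω, U ω), X ω)) = ent p (fun ω => ((X ω, Y ω), U ω)) :=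
    ent_comp_injective p (fun ω => ((X ω, Y ω), U ω))
      (e := fun s : (α × β) × γ => ((s.1.2, s.2), s.1.1))
      fun _ _ h => by simp only [Prod.mk.injEq] at h; ext <;> tauto
  rw [cmi, centH, centH, centH, ent_swap p Y U, e₁] at hXU
  rw [cmi, centH, centH, centH, ent_swap p X Y, ent_swap p X U, e₂] at hYU
  rw [mi, mi, cmi, centH, centH, centH]
  linarith

lemma mi_pr (p : Ω → ℝ) (Z : Ω → δ) (X : δ → α) (Y : δ → β) :
    mi (pr p Z) X Y = mi p (fun ω => X (Z ω)) (fun ω => Y (Z ω)) := by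
  simp only [mi, ent_pr]

lemma cmi_pr (p : Ω → ℝ) (Z : Ω → δ) (X : δ → α) (Y : δ → β) (U : δ → γ) :
    cmi (pr p Z) X Y U = cmi p (fun ω => X (Z ω)) (fun ω => Y (Z ω)) (fun ω => U (Z ω)) := by
  simp only [cmi, centH, ent_pr]

lemma mi_eq_ent_of_eq_comp {X : Ω → α} {W : Ω → β} {φ : α → β} (hW : ∀ ω, W ω = φ (X ω)) :
    mi p X W = ent p W := by
  rw [mi, ent_prod_of_eq_comp hW]
  ring

lemma cmi_eq_mi_sub_ent_of_eq_comp {X : Ω → α} {Y : Ω → β} {W : Ω → γ} {φ : α → γ} {ψ : β → γ}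
    (hX : ∀ ω, W ω = φ (X ω)) (hY : ∀ ω, W ω = ψ (Y ω)) :
    cmi p X Y W = mi p X Y - ent p W := by
  rw [cmi, centH, centH, centH, ent_prod_of_eq_comp hX, ent_prod_of_eq_comp hY,
    ent_prod_of_eq_comp (X := fun ω => (X ω, Y ω)) (φ := fun s => φ s.1) hX, mi]
  ring

lemma mi_prod_common_eq_ent_add_cmi (p : Ω → ℝ) (X : Ω → α) (Y : Ω → β) (V : Ω → γ) :
    mi p (fun ω => (X ω, V ω)) (fun ω => (Y ω, V ω)) = ent p V + cmi p X Y V := by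
  have e : ent p (fun ω => ((X ω, V ω), (Y ω, V ω))) = ent p (fun ω => ((X ω, Y ω), V ω)) :=
    ent_comp_injective p (fun ω => ((X ω, Y ω), V ω))
      (e := fun s : (α × β) × γ => ((s.1.1, s.2), (s.1.2, s.2)))
      fun _ _ h => by simp only [Prod.mk.injEq] at h; ext <;> tauto
  rw [mi, cmi, centH, centH, centH, e]
  ring

end Information

section Channel

variable {α β γ δ : Type*} [Fintype α] [Fintype β] [Fintype γ] {q : α × β → ℝ}
  {w : α → β → γ → ℝ}

lemma IsPMF.jointQ (hq : IsPMF q) (hw : CondPMF w) : IsPMF (jointQ q w) := by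
  refine ⟨fun _ => mul_nonneg (hq.1 _) (hw.1 _ _ _), ?_⟩
  rw [← hq.2, Fintype.sum_prod_type q]
  simp only [_root_.jointQ, Fintype.sum_prod_type, ← Finset.mul_sum, hw.2, mul_one]

lemma pr_jointQ [Fintype δ] [DecidableEq δ] (hw : CondPMF w) (g : α × β → δ) (e : δ) :
    pr (jointQ q w) (fun ω => g (ω.1, ω.2.1)) e = pr q g e := by
  simp only [pr, Finset.sum_filter, Fintype.sum_prod_type, jointQ]
  refine Finset.sum_congr rfl fun x _ => Finset.sum_congr rfl fun y _ => ?_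
  split_ifs
  · rw [← Finset.mul_sum, hw.2, mul_one]
  · exact Finset.sum_const_zero

lemma ent_jointQ [Fintype δ] [DecidableEq δ] (hw : CondPMF w) (g : α × β → δ) :
    ent (jointQ q w) (fun ω => g (ω.1, ω.2.1)) = ent q g := by
  simp only [ent, pr_jointQ hw]

lemma mi_jointQ [DecidableEq α] [DecidableEq β] (hw : CondPMF w) :
    mi (jointQ q w) (fun ω => ω.1) (fun ω => ω.2.1) = mi q Prod.fst Prod.snd := by
  rw [mi, mi, ← ent_jointQ hw Prod.fst, ← ent_jointQ hw Prod.snd,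
    ← ent_jointQ hw fun s => (s.1, s.2)]

theorem mi_le_miXYU_add_cmiXY [DecidableEq α] [DecidableEq β] [DecidableEq γ] (hq : IsPMF q)
    (hw : CondPMF w) :
    mi q Prod.fst Prod.snd ≤ miXYU q w + cmiXY q w := by
  rw [← mi_jointQ hw]
  exact mi_le_mi_add_cmi (hq.jointQ hw) _ _ _

end Channel

section DeterministicChannel

variable {Ω α β γ : Type*} [DecidableEq γ]

def deterministicChannel (φ : α → β → γ) : α → β → γ → ℝ :=
  fun x y u => if u = φ x y then 1 else 0

lemma condPMF_deterministicChannel [Fintype γ] (φ : α → β → γ) :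
    CondPMF (deterministicChannel φ) :=
  ⟨fun _ _ _ => by unfold deterministicChannel; split_ifs <;> norm_num,
    fun _ _ => by simp [deterministicChannel]⟩

variable [Fintype Ω] [Fintype α] [DecidableEq α] [Fintype β] [DecidableEq β] [Fintype γ]

lemma jointQ_pr_deterministicChannel (p : Ω → ℝ) (X : Ω → α) (Y : Ω → β) (φ : α → β → γ) :
    jointQ (pr p fun ω => (X ω, Y ω)) (deterministicChannel φ)
      = pr p fun ω => (X ω, Y ω, φ (X ω) (Y ω)) := by
  funext ⟨x, y, u⟩
  simp only [jointQ, deterministicChannel, mul_ite, mul_one, mul_zero]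
  split_ifs with hu
  · subst hu
    refine Finset.sum_congr (Finset.filter_congr fun ω _ => ?_) fun _ _ => rfl
    simp only [Prod.mk.injEq]
    constructor
    · rintro ⟨rfl, rfl⟩
      exact ⟨rfl, rfl, rfl⟩
    · exact fun h => ⟨h.1, h.2.1⟩
  · rw [pr, Finset.sum_filter]
    refine (Finset.sum_eq_zero fun ω _ => if_neg ?_).symm
    simp only [Prod.mk.injEq]
    rintro ⟨rfl, rfl, rfl⟩
    exact hu rfl

lemma cmiXY_pr_deterministicChannel (p : Ω → ℝ) (X : Ω → α) (Y : Ω → β) (φ : α → β → γ) :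
    cmiXY (pr p fun ω => (X ω, Y ω)) (deterministicChannel φ)
      = cmi p X Y fun ω => φ (X ω) (Y ω) := by
  rw [cmiXY, jointQ_pr_deterministicChannel, cmi_pr]

lemma miXYU_pr_deterministicChannel (p : Ω → ℝ) (X : Ω → α) (Y : Ω → β) (φ : α → β → γ) :
    miXYU (pr p fun ω => (X ω, Y ω)) (deterministicChannel φ)
      = mi p (fun ω => (X ω, Y ω)) fun ω => φ (X ω) (Y ω) := by
  rw [miXYU, jointQ_pr_deterministicChannel, mi_pr]

end DeterministicChannel

lemma card_le_card_prod_mul_card_prod_add_two (A B C : Type*) [Fintype A] [Fintype B] [Fintype C]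
    [Nonempty A] [Nonempty B] :
    Fintype.card C ≤ Fintype.card (A × C) * Fintype.card (B × C) + 2 := by
  rw [Fintype.card_prod, Fintype.card_prod]
  rcases Nat.eq_zero_or_pos (Fintype.card C) with hC | hC
  · omega
  calc Fintype.card C ≤ Fintype.card A * Fintype.card C :=
        Nat.le_mul_of_pos_left _ Fintype.card_pos
    _ ≤ Fintype.card A * Fintype.card C * (Fintype.card B * Fintype.card C) :=
        Nat.le_mul_of_pos_right _ (Nat.mul_pos Fintype.card_pos hC)
    _ ≤ _ := Nat.le_add_right _ _

/-- If `X = (X′,V)` and `Y = (Y′,V)` with `X′ ⊥ Y′ | V`, then Wyner's common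
information satisfies `C(X;Y) = I(X;Y) = H(V)`. -/
theorem stmt13 {Ω A B C : Type*} [Fintype Ω] [Fintype A] [DecidableEq A]
    [Fintype B] [DecidableEq B] [Fintype C] [DecidableEq C]
    (p : Ω → ℝ) (hp : IsPMF p)
    (X' : Ω → A) (Y' : Ω → B) (V : Ω → C)
    (hci : cmi p X' Y' V = 0) :
    sInf { z : ℝ | ∃ w : (A × C) → (B × C) →
          Fin (Fintype.card (A × C) * Fintype.card (B × C) + 2) → ℝ,
        CondPMF w ∧
        cmiXY (fun s => pr p (fun ω => ((X' ω, V ω), (Y' ω, V ω))) s) w = 0 ∧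
        z = miXYU (fun s => pr p (fun ω => ((X' ω, V ω), (Y' ω, V ω))) s) w }
      = mi p (fun ω => (X' ω, V ω)) (fun ω => (Y' ω, V ω))
    ∧ mi p (fun ω => (X' ω, V ω)) (fun ω => (Y' ω, V ω)) = ent p V := by
  have hI : mi p (fun ω => (X' ω, V ω)) (fun ω => (Y' ω, V ω)) = ent p V := by
    rw [mi_prod_common_eq_ent_add_cmi, hci, add_zero]
  refine ⟨IsLeast.csInf_eq ⟨?_, ?_⟩, hI⟩
  · obtain ⟨ω₀, -⟩ := Finset.exists_ne_zero_of_sum_ne_zero (hp.2 ▸ one_ne_zero : ∑ ω, p ω ≠ 0)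
    have : Nonempty A := ⟨X' ω₀⟩
    have : Nonempty B := ⟨Y' ω₀⟩
    obtain ⟨ι⟩ : Nonempty (C ↪ Fin (Fintype.card (A × C) * Fintype.card (B × C) + 2)) :=
      Function.Embedding.nonempty_of_card_le <| by
        simpa using card_le_card_prod_mul_card_prod_add_two A B C
    refine ⟨deterministicChannel fun x _ => ι x.2, condPMF_deterministicChannel _, ?_, ?_⟩
    · rw [cmiXY_pr_deterministicChannel, cmi_eq_mi_sub_ent_of_eq_comp (W := fun ω => ι (V ω))
        (φ := fun x : A × C => ι x.2) (ψ := fun y : B × C => ι y.2) (fun _ => rfl) (fun _ => rfl),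
        hI, ent_comp_injective p V ι.injective, sub_self]
    · rw [miXYU_pr_deterministicChannel, mi_eq_ent_of_eq_comp (W := fun ω => ι (V ω))
        (φ := fun s : (A × C) × (B × C) => ι s.1.2) (fun _ => rfl),
        ent_comp_injective p V ι.injective, hI]
  · rintro z ⟨w, hw, hcmi, rfl⟩
    have h := mi_le_miXYU_add_cmiXY (hp.pr fun ω => ((X' ω, V ω), (Y' ω, V ω))) hw
    rwa [hcmi, add_zero, mi_pr] at h
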